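/- arXiv:2205.14537 — 3 statements merged into one kernel-verified Lean document; each statement's English description precedes it below -/
import Mathlib

section
/- For every real z ≥ 0, the first Riesz-mean of the Dirichlet Laplacian eigenvalues on the hemisphere S²₊ satisfies (1/4)·z² − (1/3)·z·√(z + 1/4) ≤ R₁^D(z) ≤ (1/4)·z² − (1/3)·z·√(z + 1/4) + (1/4)·z. Moreover, for z > 0, equality holds in the lower bound if and only if z = l(l+1) for some integer l ≥ 1. -/
/-- First Riesz-mean of the Dirichlet Laplacian eigenvalues on the hemisphere `S²₊`:
the eigenvalues are `l(l+1)` with multiplicity `l`, for integers `l ≥ 1` (the `l = 0`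
term vanishes since its weight is `0`). -/
noncomputable def R1DS2 (z : ℝ) : ℝ :=
  ∑' l : ℕ, (l : ℝ) * max (z - (l : ℝ) * ((l : ℝ) + 1)) 0

lemma sum_id (z : ℝ) (n : ℕ) :
    ∑ l ∈ Finset.range (n+1), (l:ℝ) * (z - (l:ℝ) * ((l:ℝ)+1)) =
      z * ((n:ℝ)*((n:ℝ)+1)/2) - ((n:ℝ)^2*((n:ℝ)+1)^2/4 + (n:ℝ)*((n:ℝ)+1)*(2*(n:ℝ)+1)/6) := by
  induction n with
  | zero => simp
  | succ k ih =>
      rw [Finset.sum_range_succ, ih]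
      push_cast
      ring

lemma R1_eq (z : ℝ) (L : ℕ) (h1 : (L:ℝ)*((L:ℝ)+1) ≤ z) (h2 : z < ((L:ℝ)+1)*((L:ℝ)+2)) :
    R1DS2 z = z * ((L:ℝ)*((L:ℝ)+1)/2) - ((L:ℝ)^2*((L:ℝ)+1)^2/4 + (L:ℝ)*((L:ℝ)+1)*(2*(L:ℝ)+1)/6) := by
  have hz : R1DS2 z = ∑ l ∈ Finset.range (L+1), (l:ℝ) * max (z - (l:ℝ)*((l:ℝ)+1)) 0 := by
    apply tsum_eq_sum
    intro l hl
    have hl' : (L:ℝ) + 1 ≤ (l:ℝ) := by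
      have : L + 1 ≤ l := Nat.le_of_not_lt (fun h => hl (Finset.mem_range.2 h))
      exact_mod_cast this
    have : z - (l:ℝ)*((l:ℝ)+1) ≤ 0 := by nlinarith
    rw [max_eq_right this, mul_zero]
  rw [hz, ← sum_id z L]
  apply Finset.sum_congr rfl
  intro l hl
  have hl' : (l:ℝ) ≤ (L:ℝ) := by
    have : l ≤ L := Nat.lt_succ_iff.mp (Finset.mem_range.mp hl)
    exact_mod_cast this
  have hl0 : (0:ℝ) ≤ (l:ℝ) := Nat.cast_nonneg l
  have : 0 ≤ z - (l:ℝ)*((l:ℝ)+1) := by nlinarith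
  rw [max_eq_left this]

lemma sqrt_val (w : ℝ) (hw : 0 ≤ w) : Real.sqrt (w*(w+1) + 1/4) = w + 1/2 := by
  have : w*(w+1) + 1/4 = (w + 1/2)^2 := by ring
  rw [this, Real.sqrt_sq (by linarith)]

set_option maxHeartbeats 1000000 in
theorem riesz_mean_dirichlet_S2_hemisphere_bounds :
    (∀ z : ℝ, 0 ≤ z →
      (1 / 4) * z ^ 2 - (1 / 3) * z * Real.sqrt (z + 1 / 4) ≤ R1DS2 z ∧
      R1DS2 z ≤ (1 / 4) * z ^ 2 - (1 / 3) * z * Real.sqrt (z + 1 / 4) + (1 / 4) * z) ∧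
    (∀ z : ℝ, 0 < z →
      ((1 / 4) * z ^ 2 - (1 / 3) * z * Real.sqrt (z + 1 / 4) = R1DS2 z ↔
        ∃ l : ℕ, 1 ≤ l ∧ z = (l : ℝ) * ((l : ℝ) + 1))) := by
  -- main setup: for z ≥ 0 get w, L, t
  have setup : ∀ z : ℝ, 0 ≤ z → ∃ (L : ℕ) (t : ℝ), 0 ≤ t ∧ t < 1 ∧
      z = ((L:ℝ)+t) * (((L:ℝ)+t)+1) ∧
      Real.sqrt (z + 1/4) = ((L:ℝ)+t) + 1/2 ∧
      R1DS2 z = z * ((L:ℝ)*((L:ℝ)+1)/2) - ((L:ℝ)^2*((L:ℝ)+1)^2/4 + (L:ℝ)*((L:ℝ)+1)*(2*(L:ℝ)+1)/6) := by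
    intro z hz
    set w := Real.sqrt (z + 1/4) - 1/2 with hwdef
    have hs : Real.sqrt (z + 1/4) ^ 2 = z + 1/4 := Real.sq_sqrt (by linarith)
    have hs2 : (1:ℝ)/2 ≤ Real.sqrt (z + 1/4) := by
      have h14 : Real.sqrt ((1:ℝ)/4) = 1/2 := by
        rw [show (1:ℝ)/4 = (1/2)^2 by norm_num, Real.sqrt_sq (by norm_num)]
      have := Real.sqrt_le_sqrt (show (1:ℝ)/4 ≤ z + 1/4 by linarith)
      linarith [h14 ▸ this]
    have hw0 : 0 ≤ w := by rw [hwdef]; linarith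
    have hzw : z = w * (w + 1) := by
      have hh : w * (w + 1) = Real.sqrt (z+1/4)^2 - 1/4 := by rw [hwdef]; ring
      rw [hs] at hh; linear_combination -hh
    refine ⟨⌊w⌋₊, w - ⌊w⌋₊, ?_, ?_, ?_, ?_, ?_⟩
    · have := Nat.floor_le hw0; linarith
    · have := Nat.lt_floor_add_one w; linarith
    · rw [hzw]; ring_nf
    · have : ((⌊w⌋₊:ℝ) + (w - ⌊w⌋₊)) + 1/2 = w + 1/2 := by ring
      rw [this, hzw, sqrt_val w hw0]
    · apply R1_eq
      · have h1 : (⌊w⌋₊:ℝ) ≤ w := Nat.floor_le hw0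
        have h0 : (0:ℝ) ≤ (⌊w⌋₊:ℝ) := Nat.cast_nonneg _
        nlinarith
      · have h2 : w < (⌊w⌋₊:ℝ) + 1 := Nat.lt_floor_add_one w
        nlinarith
  constructor
  · intro z hz
    obtain ⟨L, t, ht0, ht1, hzw, hsq, hR⟩ := setup z hz
    set n := (L:ℝ) with hn
    have hn0 : 0 ≤ n := Nat.cast_nonneg L
    constructor
    · rw [hsq, hR]
      have key : z * (n*(n+1)/2) - (n^2*(n+1)^2/4 + n*(n+1)*(2*n+1)/6)
          - ((1/4) * z^2 - (1/3) * z * ((n+t)+1/2))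
          = t*(1-t)*(t^2/4 + (5/12+n)*t + (n^2+n+1/6)) := by
        rw [hzw]; ring
      have hinner : (0:ℝ) ≤ t^2/4 + (5/12+n)*t + (n^2+n+1/6) := by
        nlinarith [sq_nonneg t, sq_nonneg n, mul_nonneg hn0 ht0]
      have hprod := mul_nonneg (mul_nonneg ht0 (by linarith : (0:ℝ) ≤ 1 - t)) hinner
      linarith
    · rw [hsq, hR]
      have key : (1/4) * z^2 - (1/3) * z * ((n+t)+1/2) + (1/4) * z
          - (z * (n*(n+1)/2) - (n^2*(n+1)^2/4 + n*(n+1)*(2*n+1)/6))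
          = (n*(t-1/2))^2 + n*(1/4 - t/2 + t^3) + (t/12 + t^3/6 + t^4/4) := by
        rw [hzw]; ring
      have h1 : (0:ℝ) ≤ 1/4 - t/2 + t^3 := by
        nlinarith [mul_nonneg ht0 (sq_nonneg (2*t-1)), sq_nonneg (t - 3/8)]
      have h2 := mul_nonneg hn0 h1
      have h3 : (0:ℝ) ≤ t/12 + t^3/6 + t^4/4 := by
        have a1 := mul_nonneg (mul_nonneg ht0 ht0) ht0
        have a2 := mul_nonneg (mul_nonneg ht0 ht0) (mul_nonneg ht0 ht0)
        nlinarith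
      linarith [sq_nonneg (n*(t-1/2))]
  · intro z hz
    constructor
    · intro heq
      obtain ⟨L, t, ht0, ht1, hzw, hsq, hR⟩ := setup z hz.le
      set n := (L:ℝ) with hn
      have hn0 : 0 ≤ n := Nat.cast_nonneg L
      have key : z * (n*(n+1)/2) - (n^2*(n+1)^2/4 + n*(n+1)*(2*n+1)/6)
          - ((1/4) * z^2 - (1/3) * z * ((n+t)+1/2))
          = t*(1-t)*(t^2/4 + (5/12+n)*t + (n^2+n+1/6)) := by
        rw [hzw]; ring
      rw [hsq] at heq
      rw [hR] at heq
      have hzero : t*(1-t)*(t^2/4 + (5/12+n)*t + (n^2+n+1/6)) = 0 := by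
        rw [← key]; linarith
      have hinner : (0:ℝ) < t^2/4 + (5/12+n)*t + (n^2+n+1/6) := by
        nlinarith [sq_nonneg t, sq_nonneg n, mul_nonneg hn0 ht0]
      have ht : t = 0 := by
        rcases mul_eq_zero.mp hzero with h | h
        · rcases mul_eq_zero.mp h with h' | h'
          · exact h'
          · linarith
        · linarith
      have hzn : z = n * (n + 1) := by rw [hzw, ht]; ring
      have hL1 : 1 ≤ L := by
        by_contra h
        have : L = 0 := by omega
        rw [this] at hn
        rw [hzn, hn] at hz
        norm_num at hz
      exact ⟨L, hL1, hzn⟩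
    · rintro ⟨l, hl1, hzl⟩
      have hl0 : (1:ℝ) ≤ (l:ℝ) := by exact_mod_cast hl1
      have hR := R1_eq z l (le_of_eq hzl.symm) (by nlinarith)
      have hsq : Real.sqrt (z + 1/4) = (l:ℝ) + 1/2 := by
        rw [hzl, sqrt_val (l:ℝ) (by linarith)]
      rw [hR, hsq, hzl]
      ring
end

section
/- For every integer d ≥ 2 and every real z ≥ 0, the first Riesz-mean of the Laplacian eigenvalues on the d-sphere satisfies R₁(z) ≥ (4/((d+2)·d!))·( z^{d/2+1} + (d(d−2)(d+2)/12)·z^{d/2} ). -/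
/-- Multiplicity of the eigenvalue `l(l+d−1)` of the Laplacian on the `d`-sphere:
`m_{l,d} = C(d+l, l) − C(d+l−2, l−2)`, the second term being `0` for `l < 2`. -/
noncomputable def sphereMult (d l : ℕ) : ℝ :=
  (Nat.choose (d + l) l : ℝ) - if 2 ≤ l then (Nat.choose (d + l - 2) (l - 2) : ℝ) else 0

/-- First Riesz-mean of the Laplacian eigenvalues on the `d`-sphere. -/
noncomputable def R1Sd (d : ℕ) (z : ℝ) : ℝ :=
  ∑' l : ℕ, sphereMult d l * max (z - (l : ℝ) * ((l : ℝ) + (d : ℝ) - 1)) 0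

/-!
Write `d = k + 2`, `λ_L = L(L+d-1)`, `N_L = ∑_{l ≤ L} m_l` and `S_L = ∑_{l ≤ L} m_l λ_l`.
Dropping the terms `l > L` and the positive parts gives the affine minorant
`R₁(z) ≥ N_L z - S_L`. Telescoping `m_l d! = (l+1)⋯(l+d) - (l-1)⋯(l+d-2)` gives
`N_L λ_L - S_L = 4 λ_L (λ_L + k(k+2)/4) (L+1)⋯(L+k) / ((k+4)(k+2)!)`, and pairing
`(L+1+i)(L+k-i) = λ_L + (i+1)(k-i)` writes the square of `(L+1)⋯(L+k)` as a product of
`λ_L + g_i` with `0 ≤ g_i ≤ c = k(k+2)(k+4)/12` and `∑ g_i = 2c` (counting the factor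
`λ_L + k(k+2)/4` twice). Keeping the three top terms of the expansion of such a product gives
`λ^k (λ + c)² ≤ ∏ (λ + g_i)`, which is the claimed bound at `z = λ_L`. The bound is convex in `z`
and `N_L λ_{L+1} - S_L = N_{L+1} λ_{L+1} - S_{L+1}`, so it stays below the affine minorant on
`[λ_L, λ_{L+1}]`.
-/

open Finset

theorem exists_le_and_lt_succ {α : Type*} [LinearOrder α] {u : ℕ → α} {z : α} (h0 : u 0 ≤ z)
    (h : ∃ n, z < u n) : ∃ L, u L ≤ z ∧ z < u (L + 1) := by
  obtain ⟨n, hn⟩ := h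
  induction n with
  | zero => exact absurd h0 hn.not_ge
  | succ n ih => exact (le_or_gt (u n) z).elim (fun h => ⟨n, h, hn⟩) ih

theorem ConvexOn.le_affine_of_mem_Icc {s : Set ℝ} {f : ℝ → ℝ} (hf : ConvexOn ℝ s f)
    {x y z α β : ℝ} (hx : x ∈ s) (hy : y ∈ s) (hz : z ∈ Set.Icc x y)
    (hfx : f x ≤ α * x + β) (hfy : f y ≤ α * y + β) : f z ≤ α * z + β := by
  rw [← segment_eq_Icc (hz.1.trans hz.2)] at hz
  obtain ⟨a, b, ha, hb, hab, rfl⟩ := hz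
  calc f (a • x + b • y) ≤ a • f x + b • f y := hf.2 hx hy ha hb hab
    _ ≤ a • (α * x + β) + b • (α * y + β) := by gcongr
    _ = α * (a • x + b • y) + β := by simp only [smul_eq_mul]; linear_combination β * hab

theorem Real.rpow_half_mul_le_of_pow_mul_sq_le {x y q : ℝ} {n : ℕ} (hx : 0 ≤ x) (hq : 0 ≤ q)
    (h : x ^ n * y ^ 2 ≤ q ^ 2) : x ^ ((n : ℝ) / 2) * y ≤ q := by
  have hsq : (x ^ ((n : ℝ) / 2)) ^ 2 = x ^ n := by
    rw [← Real.rpow_natCast _ 2, ← Real.rpow_mul hx, Nat.cast_ofNat, div_mul_cancel₀ _ two_ne_zero,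
      Real.rpow_natCast]
  exact le_of_pow_le_pow_left₀ two_ne_zero hq (by rwa [mul_pow, hsq])

theorem pow_mul_quadratic_le_prod_add (n : ℕ) {g : ℕ → ℝ} {x : ℝ} (hx : 0 ≤ x)
    (hg : ∀ i < n + 2, 0 ≤ g i) :
    x ^ n * (x ^ 2 + (∑ i ∈ range (n + 2), g i) * x +
        ((∑ i ∈ range (n + 2), g i) ^ 2 - ∑ i ∈ range (n + 2), g i ^ 2) / 2) ≤
      ∏ i ∈ range (n + 2), (x + g i) := by
  induction n with
  | zero =>
    simp only [zero_add, pow_zero, one_mul, prod_range_succ, sum_range_succ, range_zero,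
      prod_empty, sum_empty]
    nlinarith
  | succ n ih =>
    rw [show n + 1 + 2 = n + 2 + 1 from rfl, prod_range_succ, sum_range_succ _ (n + 2),
      sum_range_succ (fun i => g i ^ 2) (n + 2)]
    set S := ∑ i ∈ range (n + 2), g i
    set Q := ∑ i ∈ range (n + 2), g i ^ 2
    set w := g (n + 2)
    have hw : 0 ≤ w := hg _ (by omega)
    have hQS : Q ≤ S ^ 2 := sum_sq_le_sq_sum_of_nonneg fun i hi => hg i (by simp at hi; omega)
    have hgap : 0 ≤ w * x ^ n * ((S ^ 2 - Q) / 2) := by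
      have := pow_nonneg hx n
      have : 0 ≤ (S ^ 2 - Q) / 2 := by linarith
      positivity
    calc x ^ (n + 1) * (x ^ 2 + (S + w) * x + ((S + w) ^ 2 - (Q + w ^ 2)) / 2)
        ≤ x ^ n * (x ^ 2 + S * x + (S ^ 2 - Q) / 2) * (x + w) := by
          linarith [show x ^ n * (x ^ 2 + S * x + (S ^ 2 - Q) / 2) * (x + w) -
            x ^ (n + 1) * (x ^ 2 + (S + w) * x + ((S + w) ^ 2 - (Q + w ^ 2)) / 2) =
            w * x ^ n * ((S ^ 2 - Q) / 2) by ring]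
      _ ≤ (∏ i ∈ range (n + 2), (x + g i)) * (x + w) := by
          gcongr
          exact ih fun i hi => hg i (by omega)

theorem pow_mul_add_sq_le_prod_add (n : ℕ) {g : ℕ → ℝ} {x c : ℝ} (hx : 0 ≤ x)
    (hg : ∀ i < n + 2, 0 ≤ g i ∧ g i ≤ c) (hsum : ∑ i ∈ range (n + 2), g i = 2 * c) :
    x ^ n * (x + c) ^ 2 ≤ ∏ i ∈ range (n + 2), (x + g i) := by
  have hQ : ∑ i ∈ range (n + 2), g i ^ 2 ≤ 2 * c ^ 2 :=
    calc ∑ i ∈ range (n + 2), g i ^ 2 ≤ ∑ i ∈ range (n + 2), c * g i := by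
          refine sum_le_sum fun i hi => ?_
          obtain ⟨h0, h1⟩ := hg i (mem_range.1 hi)
          nlinarith
      _ = 2 * c ^ 2 := by rw [← mul_sum, hsum]; ring
  refine le_trans ?_ (pow_mul_quadratic_le_prod_add n hx fun i hi => (hg i hi).1)
  rw [hsum]
  gcongr
  linarith

noncomputable def sphereEigenvalue (d l : ℕ) : ℝ := (l : ℝ) * ((l : ℝ) + (d : ℝ) - 1)

noncomputable def sphereCount (d L : ℕ) : ℝ := ∑ l ∈ range (L + 1), sphereMult d l

noncomputable def sphereEigenvalueSum (d L : ℕ) : ℝ :=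
  ∑ l ∈ range (L + 1), sphereMult d l * sphereEigenvalue d l

noncomputable def sphereWeylBound (d : ℕ) (z : ℝ) : ℝ :=
  4 / (((d : ℝ) + 2) * (Nat.factorial d : ℝ)) *
    (z ^ ((d : ℝ) / 2 + 1) + ((d : ℝ) * ((d : ℝ) - 2) * ((d : ℝ) + 2) / 12) * z ^ ((d : ℝ) / 2))

-- With truncated subtraction, `l - 1 = 0` for `l < 2`, and `0.ascFactorial d = 0` kills the
-- second term exactly where `sphereMult` has none.
theorem sphereMult_mul_factorial {d : ℕ} (hd : 0 < d) (l : ℕ) :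
    sphereMult d l * d.factorial = (l + 1).ascFactorial d - (l - 1).ascFactorial d := by
  unfold sphereMult
  split_ifs with hl
  · obtain ⟨j, rfl⟩ : ∃ j, l = j + 2 := ⟨l - 2, by omega⟩
    rw [show j + 2 - 1 = j + 1 by omega, Nat.ascFactorial_eq_factorial_mul_choose,
      Nat.ascFactorial_eq_factorial_mul_choose, show d + (j + 2) - 2 = j + d by omega,
      show j + 2 - 2 = j by omega, show d + (j + 2) = j + 1 + 1 + d by omega,
      Nat.choose_symm_add, Nat.choose_symm_add]
    push_cast
    ring
  · obtain ⟨d, rfl⟩ : ∃ d', d = d' + 1 := ⟨d - 1, by omega⟩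
    rw [show l - 1 = 0 by omega, Nat.zero_ascFactorial, Nat.ascFactorial_eq_factorial_mul_choose,
      add_comm (d + 1), Nat.choose_symm_add]
    push_cast
    ring

theorem sphereMult_nonneg {d : ℕ} (hd : 0 < d) (l : ℕ) : 0 ≤ sphereMult d l := by
  have h := sphereMult_mul_factorial hd l
  have hle : ((l - 1).ascFactorial d : ℝ) ≤ (l + 1).ascFactorial d := by
    exact_mod_cast Nat.ascFactorial_le d (by omega)
  exact nonneg_of_mul_nonneg_left (h ▸ sub_nonneg.2 hle) (by positivity)

theorem sphereCount_mul_factorial {d : ℕ} (hd : 0 < d) (L : ℕ) :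
    sphereCount d L * d.factorial = (L + 1).ascFactorial d + L.ascFactorial d := by
  obtain ⟨d, rfl⟩ : ∃ d', d = d' + 1 := ⟨d - 1, by omega⟩
  induction L with
  | zero => simp [sphereCount, sphereMult_mul_factorial hd, Nat.zero_ascFactorial]
  | succ L ih =>
    rw [sphereCount, sum_range_succ, add_mul, ← sphereCount, ih, sphereMult_mul_factorial hd]
    simp only [Nat.add_sub_cancel]
    ring

theorem le_sphereEigenvalue {d : ℕ} (hd : 0 < d) (l : ℕ) : (l : ℝ) ≤ sphereEigenvalue d l := by
  have : (1 : ℝ) ≤ d := by exact_mod_cast hd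
  unfold sphereEigenvalue
  rcases Nat.eq_zero_or_pos l with rfl | hl
  · simp
  · have : (1 : ℝ) ≤ l := by exact_mod_cast hl
    nlinarith

theorem sphereEigenvalue_nonneg {d : ℕ} (hd : 0 < d) (l : ℕ) : 0 ≤ sphereEigenvalue d l :=
  l.cast_nonneg.trans (le_sphereEigenvalue hd l)

theorem exists_sphereEigenvalue_le_lt {d : ℕ} (hd : 0 < d) {z : ℝ} (hz : 0 ≤ z) :
    ∃ L, sphereEigenvalue d L ≤ z ∧ z < sphereEigenvalue d (L + 1) :=
  exists_le_and_lt_succ (by simpa [sphereEigenvalue] using hz)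
    ⟨⌊z⌋₊ + 1, (Nat.lt_floor_add_one z).trans_le (by exact_mod_cast le_sphereEigenvalue hd _)⟩

theorem sphereCount_mul_sub_le_R1Sd {d : ℕ} (hd : 0 < d) (L : ℕ) (z : ℝ) :
    sphereCount d L * z - sphereEigenvalueSum d L ≤ R1Sd d z := by
  set f := fun l : ℕ => sphereMult d l * max (z - (l : ℝ) * ((l : ℝ) + (d : ℝ) - 1)) 0
  have hf : Summable f := by
    refine summable_of_ne_finset_zero (s := range (⌊z⌋₊ + 1)) fun l hl => ?_
    have hzl : z ≤ sphereEigenvalue d l :=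
      ((Nat.lt_floor_add_one z).trans_le (by exact_mod_cast not_lt.1 (mt mem_range.2 hl))).le.trans
        (le_sphereEigenvalue hd l)
    unfold sphereEigenvalue at hzl
    simp only [f, max_eq_right (sub_nonpos.2 hzl), mul_zero]
  calc sphereCount d L * z - sphereEigenvalueSum d L
      = ∑ l ∈ range (L + 1), sphereMult d l * (z - sphereEigenvalue d l) := by
        simp only [sphereCount, sphereEigenvalueSum, sum_mul, ← sum_sub_distrib, mul_sub]
    _ ≤ ∑ l ∈ range (L + 1), f l :=
        sum_le_sum fun l _ => mul_le_mul_of_nonneg_left (le_max_left _ _) (sphereMult_nonneg hd l)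
    _ ≤ R1Sd d z :=
        hf.sum_le_tsum _ fun l _ => mul_nonneg (sphereMult_nonneg hd l) (le_max_right _ _)

theorem sphereCount_succ_mul_sub (d L : ℕ) :
    sphereCount d (L + 1) * sphereEigenvalue d (L + 1) - sphereEigenvalueSum d (L + 1) =
      sphereCount d L * sphereEigenvalue d (L + 1) - sphereEigenvalueSum d L := by
  simp only [sphereCount, sphereEigenvalueSum, sum_range_succ _ (L + 1)]
  ring

theorem sphereCount_mul_sub_mul (k L : ℕ) :
    (sphereCount (k + 2) L * sphereEigenvalue (k + 2) L - sphereEigenvalueSum (k + 2) L) *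
        ((k + 4) * (k + 2).factorial) =
      sphereEigenvalue (k + 2) L * (2 * L + k + 2) * (2 * L + k) * (L + 1).ascFactorial k := by
  induction L with
  | zero => simp [sphereEigenvalue, sphereEigenvalueSum]
  | succ L ih =>
    have hA : (L + 1).ascFactorial (k + 2) + L.ascFactorial (k + 2) =
        (2 * L + k + 2) * ((L + 1 + k) * (L + 1).ascFactorial k) := by
      have h0 : L.ascFactorial (k + 2) = L * (L + 1).ascFactorial (k + 1) := by
        rw [show k + 2 = 1 + (k + 1) by omega, ← Nat.ascFactorial_mul_ascFactorial L 1]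
        simp [Nat.ascFactorial_succ]
      rw [h0, Nat.ascFactorial_succ, Nat.ascFactorial_succ]
      ring
    have hP : (L + 1) * (L + 2).ascFactorial k = (L + 1 + k) * (L + 1).ascFactorial k := by
      rw [← Nat.ascFactorial_succ, Nat.succ_eq_add_one, add_comm k,
        ← Nat.ascFactorial_mul_ascFactorial (L + 1) 1]
      simp only [Nat.ascFactorial_succ, Nat.ascFactorial_zero]
      ring
    have hN := sphereCount_mul_factorial (d := k + 2) (by omega) L
    rw [← Nat.cast_add, hA] at hN
    replace hP : ((L : ℝ) + 1) * (L + 2).ascFactorial k = (L + 1 + k) * (L + 1).ascFactorial k := by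
      exact_mod_cast hP
    rw [sphereCount_succ_mul_sub]
    unfold sphereEigenvalue at *
    push_cast at *
    linear_combination ih + (k + 4) * (2 * L + k + 2) * hN -
      (L + k + 2) * (2 * L + k + 4) * (2 * L + k + 2) * hP

theorem sum_range_add_one_mul_sub (k : ℕ) :
    ∑ i ∈ range k, ((i : ℝ) + 1) * (k - i) = k * (k + 1) * (k + 2) / 6 := by
  induction k with
  | zero => simp
  | succ k ih =>
    have hgauss : ∀ n : ℕ, ∑ i ∈ range n, ((i : ℝ) + 1) = n * (n + 1) / 2 := by
      intro n
      induction n with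
      | zero => simp
      | succ n ihn => rw [sum_range_succ, ihn]; push_cast; ring
    simp only [Nat.cast_add_one, add_sub_right_comm _ (1 : ℝ), mul_add_one, sum_add_distrib,
      sum_range_succ _ k, ih, hgauss]
    ring

theorem sq_ascFactorial_eq_prod (k L : ℕ) :
    (((L + 1).ascFactorial k : ℕ) : ℝ) ^ 2 =
      ∏ i ∈ range k, (sphereEigenvalue (k + 2) L + ((i : ℝ) + 1) * (k - i)) := by
  have hP : (((L + 1).ascFactorial k : ℕ) : ℝ) = ∏ i ∈ range k, ((L : ℝ) + 1 + i) := by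
    rw [Nat.ascFactorial_eq_prod_range]
    push_cast
    rfl
  have hP' := hP.trans (prod_range_reflect (fun i : ℕ => (L : ℝ) + 1 + i) k).symm
  rw [sq]
  nth_rw 1 [hP]
  rw [hP', ← prod_mul_distrib]
  refine prod_congr rfl fun i hi => ?_
  rw [Nat.cast_sub (by simp at hi; omega), Nat.cast_sub (by simp at hi; omega), sphereEigenvalue]
  push_cast
  ring

theorem sphereEigenvalue_pow_mul_le (k L : ℕ) :
    sphereEigenvalue (k + 2) L ^ k * (sphereEigenvalue (k + 2) L + k * (k + 2) * (k + 4) / 12) ^ 2 ≤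
      ((sphereEigenvalue (k + 2) L + k * (k + 2) / 4) * (L + 1).ascFactorial k) ^ 2 := by
  set x := sphereEigenvalue (k + 2) L
  set g : ℕ → ℝ := fun i => if i < k then ((i : ℝ) + 1) * (k - i) else k * (k + 2) / 4
  have hk : (0 : ℝ) ≤ k := k.cast_nonneg
  have hg_lt : ∀ i ∈ range k, g i = ((i : ℝ) + 1) * (k - i) := fun i hi => if_pos (mem_range.1 hi)
  have hg_k : g k = k * (k + 2) / 4 := if_neg (lt_irrefl k)
  have hg_k1 : g (k + 1) = k * (k + 2) / 4 := if_neg (by omega)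
  have hg : ∀ i < k + 2, 0 ≤ g i ∧ g i ≤ k * (k + 2) * (k + 4) / 12 := by
    intro i _
    by_cases hi : i < k
    · rw [hg_lt i (mem_range.2 hi)]
      have hik : (i : ℝ) + 1 ≤ k := by exact_mod_cast hi
      have : (0 : ℝ) ≤ i := i.cast_nonneg
      constructor
      · nlinarith
      · nlinarith [sq_nonneg (2 * (i : ℝ) + 1 - k), mul_nonneg (mul_nonneg hk hk) hk]
    · rw [show g i = k * (k + 2) / 4 from if_neg hi]
      have : (0 : ℝ) ≤ k * (k + 2) * (k + 1) := by positivity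
      constructor <;> nlinarith
  have hsum : ∑ i ∈ range (k + 2), g i = 2 * (k * (k + 2) * (k + 4) / 12) := by
    rw [sum_range_succ, sum_range_succ, sum_congr rfl hg_lt, sum_range_add_one_mul_sub, hg_k, hg_k1]
    ring
  have hprod : ∏ i ∈ range (k + 2), (x + g i) =
      ((x + k * (k + 2) / 4) * (L + 1).ascFactorial k) ^ 2 := by
    rw [prod_range_succ, prod_range_succ, prod_congr rfl fun i hi => by rw [hg_lt i hi], hg_k,
      hg_k1, mul_pow, sq_ascFactorial_eq_prod]
    ring
  rw [← hprod]
  exact pow_mul_add_sq_le_prod_add k (sphereEigenvalue_nonneg (by omega) L) hg hsum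

theorem convexOn_sphereWeylBound {d : ℕ} (hd : 2 ≤ d) :
    ConvexOn ℝ (Set.Ici 0) (sphereWeylBound d) := by
  have hd' : (2 : ℝ) ≤ d := by exact_mod_cast hd
  have hpow : ConvexOn ℝ (Set.Ici 0) fun x : ℝ => x ^ ((d : ℝ) / 2 + 1) :=
    convexOn_rpow (by linarith)
  have hpow' : ConvexOn ℝ (Set.Ici 0) fun x : ℝ => x ^ ((d : ℝ) / 2) :=
    convexOn_rpow (by linarith)
  have hc : (0 : ℝ) ≤ d * (d - 2) * (d + 2) / 12 := by
    have : (0 : ℝ) ≤ d - 2 := by linarith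
    positivity
  exact (hpow.add (hpow'.smul hc)).smul (c := 4 / (((d : ℝ) + 2) * d.factorial)) (by positivity)

theorem sphereWeylBound_eigenvalue_le (k L : ℕ) :
    sphereWeylBound (k + 2) (sphereEigenvalue (k + 2) L) ≤
      sphereCount (k + 2) L * sphereEigenvalue (k + 2) L - sphereEigenvalueSum (k + 2) L := by
  set x := sphereEigenvalue (k + 2) L
  have hx : 0 ≤ x := sphereEigenvalue_nonneg (by omega) L
  have hK : (0 : ℝ) < (k + 4) * (k + 2).factorial := by positivity
  have hhalf : x ^ ((k : ℝ) / 2) * (x + k * (k + 2) * (k + 4) / 12) ≤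
      (x + k * (k + 2) / 4) * (L + 1).ascFactorial k :=
    Real.rpow_half_mul_le_of_pow_mul_sq_le hx (by positivity) (sphereEigenvalue_pow_mul_le k L)
  have hexp : x ^ (((k + 2 : ℕ) : ℝ) / 2) = x ^ ((k : ℝ) / 2) * x := by
    rw [show ((k + 2 : ℕ) : ℝ) / 2 = k / 2 + 1 by push_cast; ring,
      Real.rpow_add' hx (by positivity), Real.rpow_one]
  have hexp1 : x ^ (((k + 2 : ℕ) : ℝ) / 2 + 1) = x ^ ((k : ℝ) / 2) * x * x := by
    rw [Real.rpow_add' hx (by positivity), Real.rpow_one, hexp]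
  rw [eq_div_of_mul_eq hK.ne' (sphereCount_mul_sub_mul k L), sphereWeylBound, hexp, hexp1]
  calc _ = 4 / ((k + 4) * (k + 2).factorial) * x *
        (x ^ ((k : ℝ) / 2) * (x + k * (k + 2) * (k + 4) / 12)) := by push_cast; ring
    _ ≤ 4 / ((k + 4) * (k + 2).factorial) * x *
        ((x + k * (k + 2) / 4) * (L + 1).ascFactorial k) := by
        gcongr
    _ = _ := by
        field_simp
        simp only [x, sphereEigenvalue]
        push_cast
        ring

theorem riesz_mean_sphere_improved_lower_bound (d : ℕ) (hd : 2 ≤ d) (z : ℝ) (hz : 0 ≤ z) :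
    R1Sd d z ≥
      4 / (((d : ℝ) + 2) * (Nat.factorial d : ℝ)) *
        (z ^ ((d : ℝ) / 2 + 1) +
          ((d : ℝ) * ((d : ℝ) - 2) * ((d : ℝ) + 2) / 12) * z ^ ((d : ℝ) / 2)) := by
  change sphereWeylBound d z ≤ R1Sd d z
  obtain ⟨k, rfl⟩ : ∃ k, d = k + 2 := ⟨d - 2, by omega⟩
  obtain ⟨L, hzL, hzL1⟩ := exists_sphereEigenvalue_le_lt (d := k + 2) (by omega) hz
  have hbound : sphereWeylBound (k + 2) z ≤
      sphereCount (k + 2) L * z + -sphereEigenvalueSum (k + 2) L := by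
    refine (convexOn_sphereWeylBound (by omega)).le_affine_of_mem_Icc
      (sphereEigenvalue_nonneg (by omega) L) (sphereEigenvalue_nonneg (by omega) (L + 1))
      ⟨hzL, hzL1.le⟩ ?_ ?_
    · linarith [sphereWeylBound_eigenvalue_le k L]
    · linarith [sphereCount_succ_mul_sub (k + 2) L ▸ sphereWeylBound_eigenvalue_le k (L + 1)]
  linarith [sphereCount_mul_sub_le_R1Sd (d := k + 2) (by omega) L z]
end

section
/- For all integers d ≥ 2 and L ≥ 0 and every real z, the following polynomial identity holds: ∑_{l=0}^{L} m_{l,d}·(z − l(l+d−1))·(z − d − ((d+4)/d)·l(l+d−1)) = ( ∑_{l=0}^{L} m_{l,d} )·(z − L(L+d−1))·(z − (L+1)(L+d)). -/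
lemma sphereMult_zero (d : ℕ) : sphereMult d 0 = 1 := by
  simp [sphereMult]

lemma sphereMult_one (d : ℕ) : sphereMult d 1 = (d : ℝ) + 1 := by
  simp [sphereMult, Nat.choose_one_right]

lemma sphereMult_add_two (d K : ℕ) :
    sphereMult d (K + 2) = ((d + K + 2).choose (K + 2) : ℝ) - ((d + K).choose K : ℝ) := by
  have h1 : d + (K + 2) - 2 = d + K := by omega
  have h2 : K + 2 - 2 = K := by omega
  have h3 : d + (K + 2) = d + K + 2 := by omega
  rw [sphereMult, h1, h2, h3, if_pos (by omega : 2 ≤ K + 2)]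

/-- closed form of the partial sums -/
lemma sum_sphereMult (d : ℕ) : ∀ K : ℕ,
    ∑ l ∈ Finset.range (K + 2), sphereMult d l =
      ((d + K + 1).choose (K + 1) : ℝ) + ((d + K).choose K : ℝ)
  | 0 => by
      rw [Finset.sum_range_succ, Finset.sum_range_one, sphereMult_zero, sphereMult_one]
      simp [Nat.choose_one_right]
      ring
  | (K + 1) => by
      rw [Finset.sum_range_succ, sum_sphereMult d K, sphereMult_add_two]
      rw [show d + K + 1 + 1 = d + K + 2 from rfl, show K + 1 + 1 = K + 2 from rfl]
      ring

/-- the key binomial identity for the induction step -/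
lemma key (d L : ℕ) :
    sphereMult d (L + 1) * (2 * (L:ℝ) + d) * ((L:ℝ) + 1) =
      (∑ l ∈ Finset.range (L + 1), sphereMult d l) * d * (2 * (L:ℝ) + d + 1) := by
  match L with
  | 0 =>
      rw [Finset.sum_range_one, sphereMult_zero, sphereMult_one]
      push_cast
      ring
  | (K + 1) =>
      rw [sum_sphereMult d K, sphereMult_add_two]
      have hA : ((K:ℝ) + 2) * ((d + K + 2).choose (K + 2) : ℝ) =
          ((d:ℝ) + K + 2) * ((d + K + 1).choose (K + 1) : ℝ) := by
        have h := Nat.add_one_mul_choose_eq (d + K + 1) (K + 1)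
        have h' : ((d + K + 2) * (d + K + 1).choose (K + 1) : ℕ) =
            ((d + K + 2).choose (K + 2) * (K + 2) : ℕ) := by
          simpa [Nat.succ_eq_add_one] using h
        have h2 := congrArg (fun n : ℕ => (n : ℝ)) h'
        push_cast at h2
        linarith [h2]
      have hB : ((K:ℝ) + 1) * ((d + K + 1).choose (K + 1) : ℝ) =
          ((d:ℝ) + K + 1) * ((d + K).choose K : ℝ) := by
        have h := Nat.add_one_mul_choose_eq (d + K) K
        have h' : ((d + K + 1) * (d + K).choose K : ℕ) =
            ((d + K + 1).choose (K + 1) * (K + 1) : ℕ) := by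
          simpa [Nat.succ_eq_add_one] using h
        have h2 := congrArg (fun n : ℕ => (n : ℝ)) h'
        push_cast at h2
        linarith [h2]
      push_cast
      have hK : (K:ℝ) + 1 ≠ 0 := by positivity
      apply mul_left_cancel₀ hK
      linear_combination ((K:ℝ)+1) * (2*(K:ℝ)+2+d) * hA +
        ((d:ℝ)*K + d + 2*(K:ℝ)^2 + 6*K + 4) * hB

theorem sum_rule_polynomial_identity_sphere (d L : ℕ) (hd : 2 ≤ d) (z : ℝ) :
    ∑ l ∈ Finset.range (L + 1),
        sphereMult d l * (z - (l : ℝ) * ((l : ℝ) + (d : ℝ) - 1)) *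
          (z - (d : ℝ) - (((d : ℝ) + 4) / (d : ℝ)) * ((l : ℝ) * ((l : ℝ) + (d : ℝ) - 1))) =
      (∑ l ∈ Finset.range (L + 1), sphereMult d l) *
        (z - (L : ℝ) * ((L : ℝ) + (d : ℝ) - 1)) *
        (z - ((L : ℝ) + 1) * ((L : ℝ) + (d : ℝ))) := by
  have hd0 : (d : ℝ) ≠ 0 := by positivity
  induction L with
  | zero =>
      rw [Finset.sum_range_one, Finset.sum_range_one]
      push_cast
      ring
  | succ L ih =>
      rw [Finset.sum_range_succ, Finset.sum_range_succ (f := fun l => sphereMult d l), ih]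
      have hk := key d L
      push_cast
      field_simp
      linear_combination (-2 * (z - ((L:ℝ)+1)*((L:ℝ)+d))) * hk
end
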